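/- Let R be a (q,s) chain ring, μ an s-shape with m = μ_s, and κ an s-shape with κ ⪯ (n,…,n) and κ ⪯ μ. Then the map sending a matrix to its row span is a bijection between the set of matrices in row canonical form belonging to T_κ(R^{n×μ}) and the set of submodules of R^μ of shape κ. In particular, the number of row canonical forms in T_κ(R^{n×μ}) equals the number of submodules of R^μ of shape κ. -/

import Mathlib

open scoped BigOperators

section ChainRingDefs

variable {R : Type*} [CommRing R]

/-- For a shape `μ = (μ₁,…,μ_s)` (0-indexed as `μ : Fin s → ℕ`), the exponent of `π`
governing the `j`-th coordinate (0-indexed) of the module `R^μ`: the number of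
components of `μ` that are `≤ j`. -/
def shapeExp {s : ℕ} (μ : Fin s → ℕ) (j : ℕ) : ℕ :=
  (Finset.univ.filter fun i : Fin s => μ i ≤ j).card

/-- The last (largest) component `μ_s` of a shape (for monotone `μ`). -/
def shapeLast {s : ℕ} (μ : Fin s → ℕ) : ℕ := Finset.univ.sup μ

/-- The module `R^μ = ⟨1⟩^{μ₁} × ⟨π⟩^{μ₂−μ₁} × ⋯ × ⟨π^{s−1}⟩^{μ_s−μ_{s−1}}`,
realized as a submodule of `R^{μ_s}`. -/
def shapeModule (R : Type*) [CommRing R] (π : R) {s : ℕ} (μ : Fin s → ℕ) :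
    Submodule R (Fin (shapeLast μ) → R) :=
  Submodule.pi Set.univ fun j => Ideal.span {π ^ shapeExp μ (j : ℕ)}

/-- The module `M` has shape `μ`, i.e. `M ≅ R^μ`. -/
def HasShape (R : Type*) [CommRing R] (π : R) {s : ℕ} (μ : Fin s → ℕ)
    (M : Type*) [AddCommGroup M] [Module R M] : Prop :=
  Nonempty (M ≃ₗ[R] shapeModule R π μ)

/-- The row span of a matrix: the submodule of `R^m` generated by its rows. -/
def rowSpan (R : Type*) [CommRing R] {n m : ℕ} (A : Matrix (Fin n) (Fin m) R) :
    Submodule R (Fin m → R) :=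
  Submodule.span R (Set.range fun i => A i)

-- The degree of `a ∈ R`: the unique `l` with `a ∈ ⟨π^l⟩ \ ⟨π^{l+1}⟩` for `a ≠ 0`,
-- and `s` for `a = 0`.
open Classical in
noncomputable def degR (π : R) (s : ℕ) (a : R) : ℕ :=
  if a = 0 then s else sSup {l : ℕ | a ∈ Ideal.span {π ^ l}}

/-- `j` is the pivot position of the row `r`: the earliest entry among the entries of
least degree in that row. -/
def IsPivotIdx (π : R) (s : ℕ) {m : ℕ} (r : Fin m → R) (j : Fin m) : Prop :=
  (∀ k, degR π s (r j) ≤ degR π s (r k)) ∧ ∀ k, k < j → degR π s (r j) < degR π s (r k)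

/-- `V` is a complete set of residues modulo `π` containing `0`. -/
def IsCompleteResidues (π : R) (V : Set R) : Prop :=
  0 ∈ V ∧ ∀ a : R, ∃! v, v ∈ V ∧ a - v ∈ Ideal.span {π}

/-- The set `R(R,π^l) = {Σ_{i<l} a_i π^i : a_i ∈ V}` of residues modulo `π^l`. -/
def residueSet (π : R) (V : Set R) (l : ℕ) : Set R :=
  {x | ∃ a : Fin l → R, (∀ i, a i ∈ V) ∧ x = ∑ i, a i * π ^ (i : ℕ)}

/-- The matrix `A` is in row canonical form (with respect to the residue set `V`). -/
def IsRCF (π : R) (s : ℕ) (V : Set R) {n m : ℕ} (A : Matrix (Fin n) (Fin m) R) : Prop :=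
  -- (1) nonzero rows lie above zero rows
  (∀ i i' : Fin n, i < i' → A i' ≠ 0 → A i ≠ 0) ∧
  -- (2) pivots of smaller degree lie above pivots of larger degree; among pivots of
  -- equal degree, earlier pivots lie above later ones
  (∀ i i' : Fin n, ∀ j j' : Fin m, i < i' → A i ≠ 0 → A i' ≠ 0 →
      IsPivotIdx π s (A i) j → IsPivotIdx π s (A i') j' →
      degR π s (A i j) ≤ degR π s (A i' j') ∧
        (degR π s (A i j) = degR π s (A i' j') → j ≤ j')) ∧
  -- (3) every pivot equals `π^l` for some `0 ≤ l ≤ s-1`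
  (∀ i : Fin n, ∀ j : Fin m, A i ≠ 0 → IsPivotIdx π s (A i) j →
      degR π s (A i j) < s ∧ A i j = π ^ degR π s (A i j)) ∧
  -- (4) entries below a pivot in its column are zero; entries above lie in `R(R,π^l)`
  (∀ i : Fin n, ∀ j : Fin m, A i ≠ 0 → IsPivotIdx π s (A i) j →
      (∀ i' : Fin n, i < i' → A i' j = 0) ∧
      (∀ i' : Fin n, i' < i → A i' j ∈ residueSet π V (degR π s (A i j))))

/-- For a shape `κ` (0-indexed) and `i : Fin s`, the previous component `κ_{i-1}`
(`0` when `i = 0`); with the paper's 1-indexed convention this is `κ_i` for the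
0-indexed position `i` (whose 1-indexed position is `i+1`). -/
def prevVal {s : ℕ} (κ : Fin s → ℕ) (i : Fin s) : ℕ :=
  if (i : ℕ) = 0 then 0
  else κ ⟨(i : ℕ) - 1, lt_of_le_of_lt (Nat.sub_le _ _) i.isLt⟩

end ChainRingDefs

/-!
Both halves go by induction on the number of rows. A nonzero submodule `M ≤ R^m` has a leading
pivot `(j, d)`: `d` is the least degree of an entry of an element of `M`, and `j` the first column
in which that degree occurs. The first row of any row canonical form spanning `M` has its pivot
`π ^ d` in column `j`, and its remaining rows span `M ∩ {x | x j = 0}`; so the tails of two such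
forms agree by induction, and the residue conditions above the pivots force the first rows to agree.
Conversely, an element of `M` with `j`-th entry `π ^ d`, reduced modulo a row canonical form of
`M ∩ {x | x j = 0}`, is a valid first row. The number of rows is controlled by counting: with
`c = |⟨π ^ (s - 1)⟩|` (which is `q`), a module of shape `κ ⪯ (n, …, n)` satisfies `|M| ≤ cⁿ |πM|`,
and this inequality passes from `M` to `M ∩ {x | x j = 0}` with `n - 1` in place of `n`.
-/

open scoped Pointwise

structure IsUniformizer {R : Type*} [CommRing R] [IsLocalRing R] (π : R) (s : ℕ) : Prop where
  maximalIdeal_eq : IsLocalRing.maximalIdeal R = Ideal.span {π}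
  pow_eq_zero : π ^ s = 0
  pow_pred_ne_zero : π ^ (s - 1) ≠ 0

namespace IsUniformizer

variable {R : Type*} [CommRing R] [IsLocalRing R] {π : R} {s : ℕ}

lemma pow_ne_zero_of_lt (hπ : IsUniformizer π s) {l : ℕ} (hl : l < s) : π ^ l ≠ 0 :=
  fun h => hπ.pow_pred_ne_zero (pow_eq_zero_of_le (by omega) h)

lemma isUnit_of_notMem_span (hπ : IsUniformizer π s) {c : R} (hc : c ∉ Ideal.span {π}) :
    IsUnit c :=
  IsLocalRing.notMem_maximalIdeal.mp (hπ.maximalIdeal_eq ▸ hc)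

lemma pow_mem_span_pow_iff (hπ : IsUniformizer π s) {t l : ℕ} (ht : t < s) :
    π ^ t ∈ Ideal.span {π ^ l} ↔ l ≤ t := by
  refine ⟨fun h => ?_, fun h => Ideal.mem_span_singleton.mpr (pow_dvd_pow π h)⟩
  by_contra! hlt
  obtain ⟨c, hc⟩ := Ideal.mem_span_singleton.mp h
  apply hπ.pow_pred_ne_zero
  calc π ^ (s - 1) = π ^ (s - 1 - t) * π ^ t := by rw [← pow_add]; congr 1; omega
    _ = c * π ^ (s - 1 - t + l) := by rw [hc, pow_add]; ring
    _ = 0 := by rw [pow_eq_zero_of_le (by omega) hπ.pow_eq_zero, mul_zero]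

lemma exists_isUnit_mul_pow (hπ : IsUniformizer π s) {a : R} (ha : a ≠ 0) :
    ∃ c t, IsUnit c ∧ t < s ∧ a = c * π ^ t := by
  classical
  have hex : ∃ l, a ∉ Ideal.span {π ^ (l + 1)} :=
    ⟨s, by rwa [pow_eq_zero_of_le (by omega) hπ.pow_eq_zero, Ideal.mem_span_singleton,
      zero_dvd_iff]⟩
  set t := Nat.find hex
  have hmem : a ∈ Ideal.span {π ^ t} := by
    rcases Nat.eq_zero_or_pos t with h0 | h0
    · simp [h0]
    · simpa [Nat.sub_add_cancel h0] using Nat.find_min hex (m := t - 1) (by omega)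
  obtain ⟨c, hc⟩ := Ideal.mem_span_singleton'.mp hmem
  have hcu : IsUnit c := hπ.isUnit_of_notMem_span fun hcπ => Nat.find_spec hex <| by
    obtain ⟨d, rfl⟩ := Ideal.mem_span_singleton'.mp hcπ
    exact Ideal.mem_span_singleton'.mpr ⟨d, by rw [pow_succ]; linear_combination hc⟩
  refine ⟨c, t, hcu, ?_, hc.symm⟩
  by_contra! hts
  exact ha (by rw [← hc, pow_eq_zero_of_le hts hπ.pow_eq_zero, mul_zero])

lemma degR_unit_mul_pow (hπ : IsUniformizer π s) {c : R} {t : ℕ} (hc : IsUnit c)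
    (ht : t < s) : degR π s (c * π ^ t) = t := by
  have hne : c * π ^ t ≠ 0 := by
    rw [Ne, hc.mul_right_eq_zero]; exact hπ.pow_ne_zero_of_lt ht
  have hiff : ∀ l, c * π ^ t ∈ Ideal.span {π ^ l} ↔ l ≤ t := fun l => by
    rw [Ideal.unit_mul_mem_iff_mem _ hc, hπ.pow_mem_span_pow_iff ht]
  rw [degR, if_neg hne]
  simp_rw [hiff]
  exact csSup_Iic

lemma mem_span_pow_iff_le_degR (hπ : IsUniformizer π s) {a : R} {l : ℕ} (hl : l ≤ s) :
    a ∈ Ideal.span {π ^ l} ↔ l ≤ degR π s a := by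
  rcases eq_or_ne a 0 with rfl | ha
  · simp [degR, hl]
  obtain ⟨c, t, hc, ht, rfl⟩ := hπ.exists_isUnit_mul_pow ha
  rw [hπ.degR_unit_mul_pow hc ht, Ideal.unit_mul_mem_iff_mem _ hc, hπ.pow_mem_span_pow_iff ht]

lemma degR_pow (hπ : IsUniformizer π s) {t : ℕ} (ht : t < s) : degR π s (π ^ t) = t := by
  simpa using hπ.degR_unit_mul_pow isUnit_one ht

lemma mul_pow_eq_zero_iff (hπ : IsUniformizer π s) {l : ℕ} (hl : l ≤ s) {x : R} :
    x * π ^ l = 0 ↔ x ∈ Ideal.span {π ^ (s - l)} := by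
  refine ⟨fun h => ?_, fun h => ?_⟩
  · rcases eq_or_ne x 0 with rfl | hx
    · exact zero_mem _
    obtain ⟨c, t, hc, ht, rfl⟩ := hπ.exists_isUnit_mul_pow hx
    rw [Ideal.unit_mul_mem_iff_mem _ hc, hπ.pow_mem_span_pow_iff ht]
    by_contra! hlt
    rw [mul_assoc, hc.mul_right_eq_zero, ← pow_add] at h
    exact hπ.pow_ne_zero_of_lt (by omega) h
  · obtain ⟨c, rfl⟩ := Ideal.mem_span_singleton'.mp h
    rw [mul_assoc, ← pow_add, Nat.sub_add_cancel hl, hπ.pow_eq_zero, mul_zero]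

lemma mem_span_pow_of_mul_mem (hπ : IsUniformizer π s) {x : R} {l : ℕ} (hl : l < s)
    (h : π * x ∈ Ideal.span {π ^ (l + 1)}) : x ∈ Ideal.span {π ^ l} := by
  rcases eq_or_ne x 0 with rfl | hx
  · exact zero_mem _
  obtain ⟨c, t, hc, ht, rfl⟩ := hπ.exists_isUnit_mul_pow hx
  rw [Ideal.unit_mul_mem_iff_mem _ hc, hπ.pow_mem_span_pow_iff ht]
  rw [mul_left_comm, ← pow_succ', Ideal.unit_mul_mem_iff_mem _ hc] at h
  by_contra! htl
  have := (hπ.pow_mem_span_pow_iff (t := t + 1) (by omega)).mp h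
  omega

end IsUniformizer

section Residues

variable {R : Type*} [CommRing R] {π : R} {V : Set R}

lemma mul_sum_pow {l : ℕ} (f : Fin l → R) :
    π * ∑ i : Fin l, f i * π ^ (i : ℕ) = ∑ i : Fin l, f i * π ^ ((i : ℕ) + 1) := by
  rw [Finset.mul_sum]
  exact Finset.sum_congr rfl fun i _ => by ring

lemma cons_mem_residueSet {l : ℕ} {v x : R} (hv : v ∈ V) (hx : x ∈ residueSet π V l) :
    v + π * x ∈ residueSet π V (l + 1) := by
  obtain ⟨a, ha, rfl⟩ := hx
  refine ⟨Fin.cons v a, Fin.cases hv ha, ?_⟩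
  simp [Fin.sum_univ_succ, mul_sum_pow]

lemma exists_of_mem_residueSet_succ {l : ℕ} {x : R} (hx : x ∈ residueSet π V (l + 1)) :
    ∃ v ∈ V, ∃ y ∈ residueSet π V l, x = v + π * y := by
  obtain ⟨a, ha, rfl⟩ := hx
  exact ⟨a 0, ha 0, _, ⟨_, fun i => ha i.succ, rfl⟩,
    by simp [Fin.sum_univ_succ, mul_sum_pow]⟩

lemma exists_mem_residueSet_sub_mem (hV : IsCompleteResidues π V) (l : ℕ) (a : R) :
    ∃ ρ ∈ residueSet π V l, a - ρ ∈ Ideal.span {π ^ l} := by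
  induction l generalizing a with
  | zero => exact ⟨0, ⟨Fin.elim0, fun i => i.elim0, by simp⟩, by simp⟩
  | succ l ih =>
    obtain ⟨v, ⟨hvV, hav⟩, -⟩ := hV.2 a
    obtain ⟨b, hb⟩ := Ideal.mem_span_singleton'.mp hav
    obtain ⟨ρ, hρ, hbρ⟩ := ih b
    obtain ⟨c, hc⟩ := Ideal.mem_span_singleton'.mp hbρ
    refine ⟨v + π * ρ, cons_mem_residueSet hvV hρ, Ideal.mem_span_singleton'.mpr ⟨c, ?_⟩⟩
    rw [pow_succ]
    linear_combination π * hc + hb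

lemma IsUniformizer.eq_of_mem_residueSet [IsLocalRing R] {s : ℕ} (hπ : IsUniformizer π s)
    (hV : IsCompleteResidues π V) {l : ℕ} (hl : l ≤ s) {x y : R}
    (hx : x ∈ residueSet π V l) (hy : y ∈ residueSet π V l)
    (hxy : x - y ∈ Ideal.span {π ^ l}) : x = y := by
  induction l generalizing x y with
  | zero =>
    obtain ⟨a, -, rfl⟩ := hx
    obtain ⟨b, -, rfl⟩ := hy
    simp
  | succ l ih =>
    obtain ⟨v, hv, x', hx', rfl⟩ := exists_of_mem_residueSet_succ hx
    obtain ⟨w, hw, y', hy', rfl⟩ := exists_of_mem_residueSet_succ hy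
    obtain ⟨c, hc⟩ := Ideal.mem_span_singleton'.mp hxy
    have hvw : v - w ∈ Ideal.span {π} :=
      Ideal.mem_span_singleton'.mpr ⟨c * π ^ l - (x' - y'), by linear_combination hc⟩
    obtain ⟨u, -, hu⟩ := hV.2 v
    obtain rfl : v = w := (hu v ⟨hv, by simp⟩).trans (hu w ⟨hw, hvw⟩).symm
    have hπ' : π * (x' - y') ∈ Ideal.span {π ^ (l + 1)} := by
      convert hxy using 1; ring
    rw [ih (by omega) hx' hy' (hπ.mem_span_pow_of_mul_mem (by omega) hπ')]

end Residues

section Pivots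

variable {R : Type*} [CommRing R] {π : R} {s m : ℕ}

lemma IsPivotIdx.unique {r : Fin m → R} {j j' : Fin m} (h : IsPivotIdx π s r j)
    (h' : IsPivotIdx π s r j') : j = j' := by
  rcases lt_trichotomy j j' with hlt | heq | hgt
  · exact absurd (h'.2 j hlt) (not_lt.mpr (h.1 j'))
  · exact heq
  · exact absurd (h.2 j' hgt) (not_lt.mpr (h'.1 j))

lemma exists_isPivotIdx {r : Fin m → R} (hr : r ≠ 0) : ∃ j, IsPivotIdx π s r j := by
  classical
  have : Nonempty (Fin m) := by
    by_contra h
    exact hr (funext fun k => (h ⟨k⟩).elim)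
  obtain ⟨j₀, -, hj₀⟩ := Finset.exists_min_image Finset.univ (fun j => degR π s (r j))
    Finset.univ_nonempty
  let S := Finset.univ.filter fun j => degR π s (r j) = degR π s (r j₀)
  have hS : S.Nonempty := ⟨j₀, by simp [S]⟩
  have hmin : degR π s (r (S.min' hS)) = degR π s (r j₀) :=
    (Finset.mem_filter.mp (S.min'_mem hS)).2
  refine ⟨S.min' hS, fun k => hmin ▸ hj₀ k (Finset.mem_univ _), fun k hk => ?_⟩
  rw [hmin]
  refine lt_of_le_of_ne (hj₀ k (Finset.mem_univ _)) fun he => ?_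
  exact absurd (S.min'_le k (by simp [S, ← he])) (not_le.mpr hk)

end Pivots

lemma Matrix.exists_eq_of_vecCons {ι α : Type*} {n : ℕ} (A : Matrix (Fin (n + 1)) ι α) :
    ∃ (a : ι → α) (A' : Matrix (Fin n) ι α), A = Matrix.of (Matrix.vecCons a A') :=
  ⟨_, _, (Matrix.cons_head_tail A).symm⟩

section RowSpan

variable {R : Type*} [CommRing R] {m n : ℕ}

lemma rowSpan_cons (v : Fin m → R) (A : Matrix (Fin n) (Fin m) R) :
    rowSpan R (Matrix.of (Matrix.vecCons v A)) = Submodule.span R {v} ⊔ rowSpan R A := by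
  simp only [rowSpan, ← Submodule.span_union]
  exact congrArg _ (Matrix.range_cons v A)

lemma rowSpan_eq_bot_iff {A : Matrix (Fin n) (Fin m) R} : rowSpan R A = ⊥ ↔ A = 0 := by
  rw [rowSpan, Submodule.span_eq_bot, Set.forall_mem_range]
  exact ⟨funext, fun h i => by rw [h]; rfl⟩

lemma row_mem_rowSpan (A : Matrix (Fin n) (Fin m) R) (i : Fin n) : A i ∈ rowSpan R A :=
  Submodule.subset_span ⟨i, rfl⟩

lemma apply_mem_of_mem_rowSpan {A : Matrix (Fin n) (Fin m) R} {k : Fin m} {I : Ideal R}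
    (h : ∀ i, A i k ∈ I) {w : Fin m → R} (hw : w ∈ rowSpan R A) : w k ∈ I := by
  have : rowSpan R A ≤ Submodule.comap (LinearMap.proj (R := R) (φ := fun _ => R) k) I :=
    Submodule.span_le.mpr (Set.range_subset_iff.mpr h)
  exact this hw

lemma apply_eq_zero_of_mem_rowSpan {A : Matrix (Fin n) (Fin m) R} {k : Fin m}
    (h : ∀ i, A i k = 0) {w : Fin m → R} (hw : w ∈ rowSpan R A) : w k = 0 :=
  apply_mem_of_mem_rowSpan (I := ⊥) h hw

end RowSpan

section LeadingPivot

variable {R : Type*} [CommRing R] {π : R} {s m : ℕ}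

structure IsLeadingPivot (π : R) (M : Submodule R (Fin m → R)) (j : Fin m) (d : ℕ) : Prop where
  mem_span : ∀ w ∈ M, ∀ k, w k ∈ Ideal.span {π ^ d}
  mem_span_succ : ∀ w ∈ M, ∀ k < j, w k ∈ Ideal.span {π ^ (d + 1)}
  exists_apply_eq : ∃ v ∈ M, v j = π ^ d

variable {M : Submodule R (Fin m → R)} {j : Fin m} {d : ℕ}

lemma IsLeadingPivot.sup_inf_ker (hM : IsLeadingPivot π M j d) {v : Fin m → R} (hv : v ∈ M)
    (hvj : v j = π ^ d) :
    Submodule.span R {v} ⊔ (M ⊓ LinearMap.ker (LinearMap.proj j)) = M := by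
  refine le_antisymm (sup_le ((Submodule.span_singleton_le_iff_mem _ _).mpr hv) inf_le_left)
    fun w hw => ?_
  obtain ⟨e, he⟩ := Ideal.mem_span_singleton'.mp (hM.mem_span w hw j)
  have hrest : w - e • v ∈ M ⊓ LinearMap.ker (LinearMap.proj j) :=
    ⟨M.sub_mem hw (M.smul_mem e hv), by simp [hvj, he]⟩
  simpa using Submodule.add_mem_sup
    (Submodule.smul_mem _ e (Submodule.mem_span_singleton_self v)) hrest

namespace IsLeadingPivot

variable [IsLocalRing R]

lemma degR_apply (hπ : IsUniformizer π s) (hM : IsLeadingPivot π M j d) (hd : d < s)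
    {w : Fin m → R} (hw : w ∈ M) (k : Fin m) :
    d ≤ degR π s (w k) ∧ (k < j → d < degR π s (w k)) :=
  ⟨(hπ.mem_span_pow_iff_le_degR hd.le).mp (hM.mem_span w hw k), fun hk =>
    (hπ.mem_span_pow_iff_le_degR hd).mp (hM.mem_span_succ w hw k hk)⟩

lemma isPivotIdx (hπ : IsUniformizer π s) (hM : IsLeadingPivot π M j d) (hd : d < s)
    {v : Fin m → R} (hv : v ∈ M) (hvj : v j = π ^ d) : IsPivotIdx π s v j := by
  rw [IsPivotIdx, hvj, hπ.degR_pow hd]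
  exact ⟨fun k => (hM.degR_apply hπ hd hv k).1, fun k => (hM.degR_apply hπ hd hv k).2⟩

lemma unique (hπ : IsUniformizer π s) {j' : Fin m} {d' : ℕ} (hM : IsLeadingPivot π M j d)
    (hM' : IsLeadingPivot π M j' d') (hd : d < s) (hd' : d' < s) : j = j' ∧ d = d' := by
  obtain ⟨v, hv, hvj⟩ := hM.exists_apply_eq
  obtain ⟨v', hv', hvj'⟩ := hM'.exists_apply_eq
  have hdd' := hM.degR_apply hπ hd hv' j'
  have hd'd := hM'.degR_apply hπ hd' hv j
  rw [hvj', hπ.degR_pow hd'] at hdd'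
  rw [hvj, hπ.degR_pow hd] at hd'd
  obtain rfl : d = d' := le_antisymm hdd'.1 hd'd.1
  refine ⟨?_, rfl⟩
  by_contra hne
  rcases lt_or_gt_of_ne hne with h | h
  · exact lt_irrefl _ (hd'd.2 h)
  · exact lt_irrefl _ (hdd'.2 h)

end IsLeadingPivot

lemma exists_isLeadingPivot [IsLocalRing R] (hπ : IsUniformizer π s) (hM : M ≠ ⊥) :
    ∃ j d, d < s ∧ IsLeadingPivot π M j d := by
  classical
  obtain ⟨w₀, hw₀, hw₀ne⟩ := Submodule.exists_mem_ne_zero_of_ne_bot hM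
  obtain ⟨k₀, hk₀⟩ := Function.ne_iff.mp hw₀ne
  have hex : ∃ l, ∃ w ∈ M, ∃ k, degR π s (w k) = l := ⟨_, w₀, hw₀, k₀, rfl⟩
  set d := Nat.find hex
  have hmin : ∀ w ∈ M, ∀ k, d ≤ degR π s (w k) := fun w hw k =>
    Nat.find_min' hex ⟨w, hw, k, rfl⟩
  have hd : d < s := by
    refine (hmin w₀ hw₀ k₀).trans_lt ?_
    obtain ⟨c, t, hc, ht, h⟩ := hπ.exists_isUnit_mul_pow hk₀
    rwa [h, hπ.degR_unit_mul_pow hc ht]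
  let S := Finset.univ.filter fun k => ∃ w ∈ M, degR π s (w k) = d
  have hS : S.Nonempty := by
    obtain ⟨w, hw, k, hk⟩ := Nat.find_spec hex
    exact ⟨k, Finset.mem_filter.mpr ⟨Finset.mem_univ _, w, hw, hk⟩⟩
  obtain ⟨w, hw, hwj⟩ := (Finset.mem_filter.mp (S.min'_mem hS)).2
  have hwj0 : w (S.min' hS) ≠ 0 := by
    rintro h
    rw [h] at hwj
    simp [degR] at hwj
    omega
  obtain ⟨c, t, hc, ht, hct⟩ := hπ.exists_isUnit_mul_pow hwj0
  rw [hct, hπ.degR_unit_mul_pow hc ht] at hwj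
  subst hwj
  refine ⟨S.min' hS, d, hd, fun w hw k => ?_, fun w hw k hk => ?_,
    ⟨(↑hc.unit⁻¹ : R) • w, M.smul_mem _ hw, ?_⟩⟩
  · exact (hπ.mem_span_pow_iff_le_degR hd.le).mpr (hmin w hw k)
  · refine (hπ.mem_span_pow_iff_le_degR hd).mpr (lt_of_le_of_ne (hmin w hw k) fun he => ?_)
    exact absurd (S.min'_le k (Finset.mem_filter.mpr ⟨Finset.mem_univ _, w, hw, he.symm⟩))
      (not_le.mpr hk)
  · rw [Pi.smul_apply, hct, smul_eq_mul, ← mul_assoc, hc.val_inv_mul, one_mul]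

end LeadingPivot

section Counting

variable {R : Type*} [CommRing R] {X Y : Type*} [AddCommGroup X] [Module R X]
  [AddCommGroup Y] [Module R Y]

lemma card_eq_card_inf_ker_mul_card_map (N : Submodule R X) (f : X →ₗ[R] Y) :
    Nat.card N = Nat.card ↥(N ⊓ LinearMap.ker f) * Nat.card ↥(N.map f) := by
  let g := f.comp N.subtype
  have hker : LinearMap.ker g = (N ⊓ LinearMap.ker f).comap N.subtype := by
    rw [LinearMap.ker_comp, Submodule.comap_inf, Submodule.comap_subtype_self, top_inf_eq]
  calc Nat.card N = Nat.card (↥N ⧸ LinearMap.ker g) * Nat.card (LinearMap.ker g) :=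
        AddSubgroup.card_eq_card_quotient_mul_card_addSubgroup (LinearMap.ker g).toAddSubgroup
    _ = _ := by
      rw [Nat.card_congr g.quotKerEquivRange.toEquiv, LinearMap.range_comp,
        Submodule.range_subtype, hker, mul_comm,
        Nat.card_congr (Submodule.comapSubtypeEquivOfLe inf_le_left).toEquiv]

lemma card_pointwise_smul_map (a : R) {f : X →ₗ[R] Y} (hf : Function.Injective f)
    (N : Submodule R X) : Nat.card ↥(a • N.map f) = Nat.card ↥(a • N) := by
  rw [← Submodule.map_pointwise_smul]
  exact (Nat.card_congr (Submodule.equivMapOfInjective f hf _).toEquiv).symm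

lemma card_pi_univ {k : ℕ} (I : Fin k → Ideal R) :
    Nat.card (Submodule.pi Set.univ I) = ∏ j, Nat.card (I j) :=
  (Nat.card_congr (Equiv.Set.univPi fun j => (I j : Set R))).trans Nat.card_pi

lemma pointwise_smul_pi_span_pow (π : R) {k : ℕ} (e : Fin k → ℕ) :
    π • Submodule.pi Set.univ (fun j => Ideal.span {π ^ e j}) =
      Submodule.pi Set.univ fun j => Ideal.span {π ^ (e j + 1)} := by
  ext x
  simp only [Submodule.mem_smul_pointwise_iff_exists, Submodule.mem_pi, Set.mem_univ,
    true_implies, Ideal.mem_span_singleton']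
  constructor
  · rintro ⟨y, hy, rfl⟩ j
    obtain ⟨c, hc⟩ := hy j
    exact ⟨c, by simp [← hc, pow_succ]; ring⟩
  · intro hx
    choose c hc using hx
    exact ⟨fun j => c j * π ^ e j, fun j => ⟨c j, rfl⟩,
      funext fun j => by simp [← hc j, pow_succ]; ring⟩

lemma eq_bot_of_card_le_card_smul [Finite X] {π : R} {s : ℕ} (hπ : π ^ s = 0)
    {M : Submodule R X} (h : Nat.card M ≤ Nat.card ↥(π • M)) : M = ⊥ := by
  have hfix : π • M = M := SetLike.coe_injective <|
    Set.eq_of_subset_of_ncard_le (Submodule.smul_le_self_of_tower π M)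
      (by rw [← Nat.card_coe_set_eq, ← Nat.card_coe_set_eq]; exact h)
  have hpow : ∀ k, π ^ k • M = M := fun k => by
    induction k with
    | zero => rw [pow_zero, one_smul]
    | succ k ih => rw [pow_succ, mul_smul, hfix, ih]
  rw [← hpow s, hπ, eq_bot_iff]
  rintro _ ⟨x, -, rfl⟩
  simp

lemma IsUniformizer.card_span_pow [IsLocalRing R] {π : R} {s : ℕ} (hπ : IsUniformizer π s)
    {l : ℕ} (hl : l < s) : Nat.card (Ideal.span {π ^ l}) =
      Nat.card (Ideal.span {π ^ (s - 1)}) * Nat.card (Ideal.span {π ^ (l + 1)}) := by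
  let f := LinearMap.mulLeft R π
  have hker : Ideal.span {π ^ l} ⊓ LinearMap.ker f = Ideal.span {π ^ (s - 1)} := by
    have : LinearMap.ker f = Ideal.span {π ^ (s - 1)} := by
      ext x
      rw [LinearMap.mem_ker, LinearMap.mulLeft_apply, mul_comm, ← pow_one π,
        hπ.mul_pow_eq_zero_iff (by omega), pow_one]
    rw [this, inf_eq_right]
    exact Ideal.span_singleton_le_span_singleton.mpr (pow_dvd_pow π (by omega))
  have hmap : Submodule.map f (Ideal.span {π ^ l}) = Ideal.span {π ^ (l + 1)} := by
    rw [Ideal.span, Submodule.map_span, Set.image_singleton, LinearMap.mulLeft_apply,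
      ← pow_succ']
  rw [card_eq_card_inf_ker_mul_card_map _ f, hker, hmap]

end Counting

section LeadingPivotCounting

variable {R : Type*} [CommRing R] {π : R} {s m : ℕ} {M : Submodule R (Fin m → R)} {j : Fin m}
  {d : ℕ}

lemma smul_eq_zero_of_mul_pow_eq_zero {w : Fin m → R} (hw : ∀ k, w k ∈ Ideal.span {π ^ d})
    {c : R} (hc : c * π ^ d = 0) : c • w = 0 := funext fun k => by
  obtain ⟨b, hb⟩ := Ideal.mem_span_singleton'.mp (hw k)
  rw [Pi.smul_apply, Pi.zero_apply, ← hb, smul_eq_mul, mul_left_comm, hc, mul_zero]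

namespace IsLeadingPivot

lemma map_proj (hM : IsLeadingPivot π M j d) :
    M.map (LinearMap.proj j) = Ideal.span {π ^ d} := by
  obtain ⟨v, hv, hvj⟩ := hM.exists_apply_eq
  exact le_antisymm (Submodule.map_le_iff_le_comap.mpr fun w hw => hM.mem_span w hw j)
    ((Ideal.span_singleton_le_iff_mem _).mpr ⟨v, hv, hvj⟩)

lemma card_eq (hM : IsLeadingPivot π M j d) :
    Nat.card M = Nat.card ↥(M ⊓ LinearMap.ker (LinearMap.proj j)) *
      Nat.card (Ideal.span {π ^ d}) := by
  rw [card_eq_card_inf_ker_mul_card_map M (LinearMap.proj j), hM.map_proj]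

lemma smul_inf_ker (hM : IsLeadingPivot π M j d) :
    (π • M) ⊓ LinearMap.ker (LinearMap.proj j) =
      π • (M ⊓ LinearMap.ker (LinearMap.proj j)) := by
  refine le_antisymm ?_ (le_inf (smul_mono_right π inf_le_left) ?_)
  · rintro _ ⟨⟨u, hu, rfl⟩, huj⟩
    obtain ⟨v, hv, hvj⟩ := hM.exists_apply_eq
    obtain ⟨e, he⟩ := Ideal.mem_span_singleton'.mp (hM.mem_span u hu j)
    have hev : π • e • v = 0 := by
      rw [smul_smul]
      refine smul_eq_zero_of_mul_pow_eq_zero (hM.mem_span v hv) ?_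
      simpa [mul_assoc, he, mul_comm] using huj
    refine ⟨u - e • v, ⟨M.sub_mem hu (M.smul_mem e hv), by simp [hvj, he]⟩, ?_⟩
    simp [smul_sub, hev]
  · rintro _ ⟨u, hu, rfl⟩
    simp [show u j = 0 from hu.2]

lemma card_smul_eq (hM : IsLeadingPivot π M j d) :
    Nat.card ↥(π • M) = Nat.card ↥(π • (M ⊓ LinearMap.ker (LinearMap.proj j))) *
      Nat.card (Ideal.span {π ^ (d + 1)}) := by
  rw [card_eq_card_inf_ker_mul_card_map _ (LinearMap.proj j), hM.smul_inf_ker,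
    Submodule.map_pointwise_smul, hM.map_proj, Ideal.span, Submodule.smul_span,
    Set.smul_set_singleton, smul_eq_mul, ← pow_succ']

lemma card_le_of_card_le [IsLocalRing R] [Finite R] (hπ : IsUniformizer π s)
    (hM : IsLeadingPivot π M j d) (hd : d < s) {n : ℕ}
    (h : Nat.card M ≤ Nat.card (Ideal.span {π ^ (s - 1)}) ^ (n + 1) * Nat.card ↥(π • M)) :
    Nat.card ↥(M ⊓ LinearMap.ker (LinearMap.proj j)) ≤
      Nat.card (Ideal.span {π ^ (s - 1)}) ^ n *
        Nat.card ↥(π • (M ⊓ LinearMap.ker (LinearMap.proj j))) := by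
  rw [hM.card_eq, hM.card_smul_eq, hπ.card_span_pow hd] at h
  have hpos : 0 < Nat.card (Ideal.span {π ^ (s - 1)}) * Nat.card (Ideal.span {π ^ (d + 1)}) :=
    Nat.mul_pos Nat.card_pos Nat.card_pos
  generalize Nat.card (Ideal.span {π ^ (s - 1)}) = c at h hpos ⊢
  generalize Nat.card (Ideal.span {π ^ (d + 1)}) = e at h hpos ⊢
  exact Nat.le_of_mul_le_mul_right (h.trans_eq (by ring)) hpos

end IsLeadingPivot

end LeadingPivotCounting

section Shapes

variable {R : Type*} [CommRing R] {π : R} {s m : ℕ}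

lemma shapeExp_lt_of_lt {κ : Fin s → ℕ} {j : ℕ} (hj : j < shapeLast κ) :
    shapeExp κ j < s := by
  obtain ⟨i, -, hi⟩ := Finset.lt_sup_iff.mp hj
  refine (Finset.card_lt_card (Finset.filter_ssubset.mpr ⟨i, Finset.mem_univ _, ?_⟩)).trans_eq
    (Finset.card_fin s)
  omega

lemma IsUniformizer.card_shapeModule [IsLocalRing R] (hπ : IsUniformizer π s)
    (κ : Fin s → ℕ) :
    Nat.card (shapeModule R π κ) = Nat.card (Ideal.span {π ^ (s - 1)}) ^ shapeLast κ *
      Nat.card ↥(π • shapeModule R π κ) := by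
  rw [shapeModule, pointwise_smul_pi_span_pow, card_pi_univ, card_pi_univ, ← Fin.prod_const,
    ← Finset.prod_mul_distrib]
  exact Finset.prod_congr rfl fun j _ => hπ.card_span_pow (shapeExp_lt_of_lt j.2)

lemma IsUniformizer.card_le_of_hasShape [IsLocalRing R] [Finite R] (hπ : IsUniformizer π s)
    {κ : Fin s → ℕ} {n : ℕ} (hκn : ∀ i, κ i ≤ n) {M : Submodule R (Fin m → R)}
    (hM : HasShape R π κ M) :
    Nat.card M ≤ Nat.card (Ideal.span {π ^ (s - 1)}) ^ n * Nat.card ↥(π • M) := by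
  obtain ⟨e⟩ := hM
  have hsmul : Nat.card ↥(π • M) = Nat.card ↥(π • shapeModule R π κ) := by
    have hM := card_pointwise_smul_map π M.injective_subtype ⊤
    have hκ := card_pointwise_smul_map π (f := (shapeModule R π κ).subtype ∘ₗ e.toLinearMap)
      ((shapeModule R π κ).injective_subtype.comp e.injective) ⊤
    rw [Submodule.map_subtype_top] at hM
    rw [Submodule.map_top, LinearMap.range_comp, LinearEquiv.range, Submodule.map_top,
      Submodule.range_subtype] at hκ
    exact hM.trans hκ.symm
  rw [Nat.card_congr e.toEquiv, hsmul, hπ.card_shapeModule]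
  exact Nat.mul_le_mul_right _
    (Nat.pow_le_pow_right Nat.card_pos (Finset.sup_le fun i _ => hκn i))

end Shapes

section RowCanonicalForm

variable {R : Type*} [CommRing R] {π : R} {s m n : ℕ} {V : Set R}

lemma isRCF_zero : IsRCF π s V (0 : Matrix (Fin n) (Fin m) R) :=
  ⟨fun _ _ _ h => (h rfl).elim, fun _ _ _ _ _ h => (h rfl).elim, fun _ _ h => (h rfl).elim,
    fun _ _ h => (h rfl).elim⟩

lemma isRCF_cons {v : Fin m → R} {A : Matrix (Fin n) (Fin m) R} {j : Fin m}
    (hA : IsRCF π s V A) (hv : IsPivotIdx π s v j) (hvs : degR π s (v j) < s)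
    (hvj : v j = π ^ degR π s (v j)) (hcol : ∀ k, A k j = 0)
    (hpiv : ∀ k jk, A k ≠ 0 → IsPivotIdx π s (A k) jk →
      degR π s (v j) ≤ degR π s (A k jk) ∧
        (degR π s (v j) = degR π s (A k jk) → j ≤ jk))
    (hres : ∀ k jk, A k ≠ 0 → IsPivotIdx π s (A k) jk →
      v jk ∈ residueSet π V (degR π s (A k jk))) :
    IsRCF π s V (Matrix.of (Matrix.vecCons v A)) := by
  have hv0 : v ≠ 0 := fun h => by simp [h, degR] at hvs
  have hsucc : ∀ {i i' : Fin (n + 1)}, i < i' → ∃ k' : Fin n, i' = k'.succ := fun hi =>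
    ⟨_, (Fin.succ_pred _ (Fin.ne_zero_of_lt hi)).symm⟩
  obtain ⟨h1, h2, h3, h4⟩ := hA
  refine ⟨fun i i' hi => ?_, fun i i' j₁ j₂ hi hne hne' hp hp' => ?_, fun i j₁ hne hp => ?_,
    fun i j₁ hne hp => ?_⟩
  · obtain ⟨k', rfl⟩ := hsucc hi
    cases i using Fin.cases with
    | zero => exact fun _ => hv0
    | succ k => exact h1 k k' (Fin.succ_lt_succ_iff.mp hi)
  · obtain ⟨k', rfl⟩ := hsucc hi
    cases i using Fin.cases with
    | zero =>
      obtain rfl := IsPivotIdx.unique hp hv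
      exact hpiv k' j₂ hne' hp'
    | succ k => exact h2 k k' j₁ j₂ (Fin.succ_lt_succ_iff.mp hi) hne hne' hp hp'
  · cases i using Fin.cases with
    | zero =>
      obtain rfl := IsPivotIdx.unique hp hv
      exact ⟨hvs, hvj⟩
    | succ k => exact h3 k j₁ hne hp
  · cases i using Fin.cases with
    | zero =>
      obtain rfl := IsPivotIdx.unique hp hv
      refine ⟨fun i' hi => ?_, fun i' hi => absurd hi (Fin.not_lt_zero _)⟩
      obtain ⟨k', rfl⟩ := hsucc hi
      exact hcol k'
    | succ k =>
      refine ⟨fun i' hi => ?_, fun i' hi => ?_⟩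
      · obtain ⟨k', rfl⟩ := hsucc hi
        exact (h4 k j₁ hne hp).1 k' (Fin.succ_lt_succ_iff.mp hi)
      · cases i' using Fin.cases with
        | zero => exact hres k j₁ hne hp
        | succ k' => exact (h4 k j₁ hne hp).2 k' (Fin.succ_lt_succ_iff.mp hi)

namespace IsRCF

variable {a : Fin m → R} {A : Matrix (Fin n) (Fin m) R} {j : Fin m}

lemma degR_pivot_lt (h : IsRCF π s V A) {k : Fin n} (hk : A k ≠ 0)
    (hj : IsPivotIdx π s (A k) j) : degR π s (A k j) < s :=
  (h.2.2.1 k j hk hj).1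

lemma tail (h : IsRCF π s V (Matrix.of (Matrix.vecCons a A))) : IsRCF π s V A := by
  obtain ⟨h1, h2, h3, h4⟩ := h
  refine ⟨fun i i' hi => h1 i.succ i'.succ (Fin.succ_lt_succ_iff.mpr hi),
    fun i i' j j' hi => h2 i.succ i'.succ j j' (Fin.succ_lt_succ_iff.mpr hi),
    fun i j => h3 i.succ j, fun i j hne hp => ⟨fun i' hi => ?_, fun i' hi => ?_⟩⟩
  · exact (h4 i.succ j hne hp).1 i'.succ (Fin.succ_lt_succ_iff.mpr hi)
  · exact (h4 i.succ j hne hp).2 i'.succ (Fin.succ_lt_succ_iff.mpr hi)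

lemma eq_zero_of_head_eq_zero (h : IsRCF π s V (Matrix.of (Matrix.vecCons a A)))
    (ha : a = 0) : Matrix.of (Matrix.vecCons a A) = 0 := funext fun i => by
  by_contra hi
  exact h.1 0 i (Fin.pos_of_ne_zero fun h0 => hi (h0 ▸ ha)) hi ha

lemma head_ne_zero (h : IsRCF π s V (Matrix.of (Matrix.vecCons a A)))
    (hspan : rowSpan R (Matrix.of (Matrix.vecCons a A)) ≠ ⊥) : a ≠ 0 := fun ha =>
  hspan (rowSpan_eq_bot_iff.mpr (h.eq_zero_of_head_eq_zero ha))

lemma degR_head_lt (h : IsRCF π s V (Matrix.of (Matrix.vecCons a A))) (ha : a ≠ 0)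
    (hj : IsPivotIdx π s a j) : degR π s (a j) < s :=
  h.degR_pivot_lt (k := 0) ha hj

lemma head_eq_pow (h : IsRCF π s V (Matrix.of (Matrix.vecCons a A))) (ha : a ≠ 0)
    (hj : IsPivotIdx π s a j) : a j = π ^ degR π s (a j) :=
  (h.2.2.1 0 j ha hj).2

lemma tail_apply_eq_zero (h : IsRCF π s V (Matrix.of (Matrix.vecCons a A))) (ha : a ≠ 0)
    (hj : IsPivotIdx π s a j) (k : Fin n) : A k j = 0 :=
  (h.2.2.2 0 j ha hj).1 k.succ k.succ_pos

lemma head_mem_residueSet (h : IsRCF π s V (Matrix.of (Matrix.vecCons a A))) {k : Fin n}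
    (hk : A k ≠ 0) (hj : IsPivotIdx π s (A k) j) : a j ∈ residueSet π V (degR π s (A k j)) :=
  (h.2.2.2 k.succ j hk hj).2 0 k.succ_pos

lemma degR_apply (h : IsRCF π s V (Matrix.of (Matrix.vecCons a A))) (ha : a ≠ 0)
    (hj : IsPivotIdx π s a j) (i : Fin (n + 1)) (k : Fin m) :
    degR π s (a j) ≤ degR π s (Matrix.vecCons a A i k) ∧
      (k < j → degR π s (a j) < degR π s (Matrix.vecCons a A i k)) := by
  have hs := h.degR_head_lt ha hj
  rcases eq_or_ne (Matrix.vecCons a A i) 0 with hi | hi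
  · simp only [hi, Pi.zero_apply, degR, if_true]
    exact ⟨hs.le, fun _ => hs⟩
  rcases eq_or_ne i 0 with rfl | hi0
  · exact ⟨hj.1 k, hj.2 k⟩
  obtain ⟨ji, hji⟩ := exists_isPivotIdx (π := π) (s := s) hi
  obtain ⟨hle, heq⟩ := h.2.1 0 i j ji (Fin.pos_of_ne_zero hi0) ha hi hj hji
  refine ⟨hle.trans (hji.1 k), fun hk => ?_⟩
  rcases hle.lt_or_eq with hlt | he
  · exact hlt.trans_le (hji.1 k)
  · exact he ▸ hji.2 k (hk.trans_le (heq he))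

lemma exists_sub_sum_smul_mem_residueSet (hV : IsCompleteResidues π V)
    {A : Matrix (Fin n) (Fin m) R} (hA : IsRCF π s V A) (v : Fin m → R) :
    ∃ c : Fin n → R, ∀ k jk, A k ≠ 0 → IsPivotIdx π s (A k) jk →
      (v - ∑ i, c i • A i) jk ∈ residueSet π V (degR π s (A k jk)) := by
  induction n generalizing v with
  | zero => exact ⟨0, fun k => k.elim0⟩
  | succ n ih =>
    obtain ⟨a, A, rfl⟩ := Matrix.exists_eq_of_vecCons A
    by_cases ha : a = 0
    · exact ⟨0, fun k _ hk _ => absurd (congrFun (hA.eq_zero_of_head_eq_zero ha) k) hk⟩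
    obtain ⟨j, hj⟩ := exists_isPivotIdx (π := π) (s := s) ha
    obtain ⟨ρ, hρ, hvρ⟩ := exists_mem_residueSet_sub_mem hV (degR π s (a j)) (v j)
    obtain ⟨c₀, hc₀⟩ := Ideal.mem_span_singleton'.mp hvρ
    obtain ⟨c, hc⟩ := ih hA.tail (v - c₀ • a)
    have hsum : v - ∑ i, Matrix.vecCons c₀ c i • Matrix.of (Matrix.vecCons a A) i =
        v - c₀ • a - ∑ k, c k • A k := by
      rw [Fin.sum_univ_succ, sub_add_eq_sub_sub]
      rfl
    refine ⟨Matrix.vecCons c₀ c, fun k => ?_⟩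
    rw [hsum]
    cases k using Fin.cases with
    | succ k => exact hc k
    | zero =>
      intro jk _ hjk
      obtain rfl := IsPivotIdx.unique hjk hj
      have hcol : (∑ k, c k • A k) jk = 0 :=
        apply_eq_zero_of_mem_rowSpan (hA.tail_apply_eq_zero ha hj)
          (Submodule.sum_mem _ fun k _ => Submodule.smul_mem _ _ (row_mem_rowSpan A k))
      have : (v - c₀ • a - ∑ k, c k • A k) jk = ρ := by
        rw [Pi.sub_apply, hcol, sub_zero, Pi.sub_apply, Pi.smul_apply, smul_eq_mul,
          hA.head_eq_pow ha hj, hc₀, sub_sub_cancel]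
      rwa [this]

variable [IsLocalRing R]

lemma isLeadingPivot (hπ : IsUniformizer π s) (h : IsRCF π s V (Matrix.of (Matrix.vecCons a A)))
    (ha : a ≠ 0) (hj : IsPivotIdx π s a j) :
    IsLeadingPivot π (rowSpan R (Matrix.of (Matrix.vecCons a A))) j (degR π s (a j)) := by
  have hs := h.degR_head_lt ha hj
  refine ⟨fun w hw k => ?_, fun w hw k hk => ?_,
    ⟨a, row_mem_rowSpan _ 0, h.head_eq_pow ha hj⟩⟩
  · exact apply_mem_of_mem_rowSpan (fun i => (hπ.mem_span_pow_iff_le_degR hs.le).mpr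
      (h.degR_apply ha hj i k).1) hw
  · exact apply_mem_of_mem_rowSpan (fun i => (hπ.mem_span_pow_iff_le_degR hs).mpr
      ((h.degR_apply ha hj i k).2 hk)) hw

lemma smul_head_eq_zero (hπ : IsUniformizer π s)
    (h : IsRCF π s V (Matrix.of (Matrix.vecCons a A))) (ha : a ≠ 0) (hj : IsPivotIdx π s a j)
    {c : R} (hc : c * a j = 0) : c • a = 0 :=
  smul_eq_zero_of_mul_pow_eq_zero ((h.isLeadingPivot hπ ha hj).mem_span a (row_mem_rowSpan _ 0))
    (h.head_eq_pow ha hj ▸ hc)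

lemma rowSpan_tail (hπ : IsUniformizer π s) (h : IsRCF π s V (Matrix.of (Matrix.vecCons a A)))
    (ha : a ≠ 0) (hj : IsPivotIdx π s a j) :
    rowSpan R A =
      rowSpan R (Matrix.of (Matrix.vecCons a A)) ⊓ LinearMap.ker (LinearMap.proj j) := by
  refine le_antisymm (Submodule.span_le.mpr ?_) fun w hw => ?_
  · rintro _ ⟨k, rfl⟩
    exact ⟨row_mem_rowSpan _ k.succ, h.tail_apply_eq_zero ha hj k⟩
  obtain ⟨hw, hwj⟩ := Submodule.mem_inf.mp hw
  rw [rowSpan_cons, Submodule.mem_sup] at hw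
  obtain ⟨_, hy, z, hz, rfl⟩ := hw
  obtain ⟨c, rfl⟩ := Submodule.mem_span_singleton.mp hy
  have hzj : z j = 0 := apply_eq_zero_of_mem_rowSpan (h.tail_apply_eq_zero ha hj) hz
  have hca : c • a = 0 := by
    refine h.smul_head_eq_zero hπ ha hj ?_
    have hwj' : (c • a + z) j = 0 := hwj
    rwa [Pi.add_apply, Pi.smul_apply, hzj, add_zero, smul_eq_mul] at hwj'
  rwa [hca, zero_add]

lemma exists_pivot_of_mem_rowSpan (hπ : IsUniformizer π s)
    {A : Matrix (Fin n) (Fin m) R} (hA : IsRCF π s V A) {x : Fin m → R}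
    (hx : x ∈ rowSpan R A) (hx0 : x ≠ 0) : ∃ k jk, A k ≠ 0 ∧ IsPivotIdx π s (A k) jk ∧
      x jk ≠ 0 ∧ x jk ∈ Ideal.span {π ^ degR π s (A k jk)} := by
  induction n with
  | zero =>
    refine absurd ((Submodule.mem_bot R).mp ?_) hx0
    rwa [show A = 0 from funext (·.elim0), rowSpan_eq_bot_iff.mpr rfl] at hx
  | succ n ih =>
    obtain ⟨a, A, rfl⟩ := Matrix.exists_eq_of_vecCons A
    rw [rowSpan_cons, Submodule.mem_sup] at hx
    obtain ⟨_, hy, z, hz, rfl⟩ := hx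
    obtain ⟨c, rfl⟩ := Submodule.mem_span_singleton.mp hy
    by_cases hca : c • a = 0
    · obtain ⟨k, jk, h⟩ := ih hA.tail (by rwa [hca, zero_add])
      exact ⟨k.succ, jk, h⟩
    have ha : a ≠ 0 := by
      rintro rfl
      exact hca (smul_zero c)
    obtain ⟨j, hj⟩ := exists_isPivotIdx (π := π) (s := s) ha
    have hzj : z j = 0 := apply_eq_zero_of_mem_rowSpan (hA.tail_apply_eq_zero ha hj) hz
    have hxj : (c • a + z) j = c * π ^ degR π s (a j) := by
      rw [Pi.add_apply, Pi.smul_apply, hzj, add_zero, smul_eq_mul, ← hA.head_eq_pow ha hj]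
    refine ⟨0, j, ha, hj, ?_, Ideal.mem_span_singleton'.mpr ⟨c, hxj.symm⟩⟩
    rw [hxj, ← hA.head_eq_pow ha hj]
    exact fun h => hca (hA.smul_head_eq_zero hπ ha hj h)

lemma eq_of_sub_mem_rowSpan (hπ : IsUniformizer π s) (hV : IsCompleteResidues π V)
    {b : Fin m → R} (ha : IsRCF π s V (Matrix.of (Matrix.vecCons a A)))
    (hb : IsRCF π s V (Matrix.of (Matrix.vecCons b A))) (hab : a - b ∈ rowSpan R A) :
    a = b := by
  by_contra hne
  obtain ⟨k, jk, hk, hjk, hne', hmem⟩ :=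
    ha.tail.exists_pivot_of_mem_rowSpan hπ hab (sub_ne_zero.mpr hne)
  exact hne' (sub_eq_zero.mpr (hπ.eq_of_mem_residueSet hV (ha.tail.degR_pivot_lt hk hjk).le
    (ha.head_mem_residueSet hk hjk) (hb.head_mem_residueSet hk hjk) hmem))

end IsRCF

variable [IsLocalRing R]

theorem IsUniformizer.exists_isRCF_rowSpan_eq [Finite R] (hπ : IsUniformizer π s)
    (hV : IsCompleteResidues π V) {M : Submodule R (Fin m → R)}
    (hM : Nat.card M ≤ Nat.card (Ideal.span {π ^ (s - 1)}) ^ n * Nat.card ↥(π • M)) :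
    ∃ A : Matrix (Fin n) (Fin m) R, IsRCF π s V A ∧ rowSpan R A = M := by
  induction n generalizing M with
  | zero =>
    refine ⟨0, isRCF_zero, ?_⟩
    rw [eq_bot_of_card_le_card_smul (M := M) hπ.pow_eq_zero (by simpa using hM),
      rowSpan_eq_bot_iff]
  | succ n ih =>
    rcases eq_or_ne M ⊥ with rfl | hM0
    · exact ⟨0, isRCF_zero, rowSpan_eq_bot_iff.mpr rfl⟩
    obtain ⟨j, d, hd, hlead⟩ := exists_isLeadingPivot hπ hM0
    obtain ⟨A, hA, hAM⟩ := ih (hlead.card_le_of_card_le hπ hd hM)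
    obtain ⟨v, hv, hvj⟩ := hlead.exists_apply_eq
    obtain ⟨c, hc⟩ := hA.exists_sub_sum_smul_mem_residueSet hV v
    have hrow : ∀ k, A k ∈ M ⊓ LinearMap.ker (LinearMap.proj j) := fun k =>
      hAM ▸ row_mem_rowSpan A k
    have hsum : ∑ i, c i • A i ∈ M ⊓ LinearMap.ker (LinearMap.proj j) :=
      Submodule.sum_mem _ fun i _ => Submodule.smul_mem _ _ (hrow i)
    set w := v - ∑ i, c i • A i with hw_def
    have hw : w ∈ M := M.sub_mem hv (Submodule.mem_inf.mp hsum).1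
    have hwj : w j = π ^ d := by
      rw [hw_def, Pi.sub_apply, hvj, show (∑ i, c i • A i) j = 0 from hsum.2, sub_zero]
    have hdeg : degR π s (w j) = d := by rw [hwj, hπ.degR_pow hd]
    refine ⟨Matrix.of (Matrix.vecCons w A), isRCF_cons hA (hlead.isPivotIdx hπ hd hw hwj)
      (hdeg ▸ hd) (hdeg ▸ hwj) (fun k => (hrow k).2) (fun k jk _ _ => ?_) hc, ?_⟩
    · obtain ⟨hle, hlt⟩ := hlead.degR_apply hπ hd (hrow k).1 jk
      rw [hdeg]
      exact ⟨hle, fun he => not_lt.mp fun h => (hlt h).ne he⟩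
    · rw [rowSpan_cons, hAM, hlead.sup_inf_ker hw hwj]

theorem IsUniformizer.eq_of_isRCF_of_rowSpan_eq (hπ : IsUniformizer π s)
    (hV : IsCompleteResidues π V) {A B : Matrix (Fin n) (Fin m) R} (hA : IsRCF π s V A)
    (hB : IsRCF π s V B) (hAB : rowSpan R A = rowSpan R B) : A = B := by
  induction n with
  | zero => exact funext (·.elim0)
  | succ n ih =>
    obtain ⟨a, A, rfl⟩ := Matrix.exists_eq_of_vecCons A
    obtain ⟨b, B, rfl⟩ := Matrix.exists_eq_of_vecCons B
    by_cases hbot : rowSpan R (Matrix.of (Matrix.vecCons a A)) = ⊥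
    · exact (rowSpan_eq_bot_iff.mp hbot).trans (rowSpan_eq_bot_iff.mp (hAB ▸ hbot)).symm
    have ha := hA.head_ne_zero hbot
    have hb := hB.head_ne_zero (hAB ▸ hbot)
    obtain ⟨j, hja⟩ := exists_isPivotIdx (π := π) (s := s) ha
    obtain ⟨jb, hjb⟩ := exists_isPivotIdx (π := π) (s := s) hb
    obtain ⟨rfl, hdeg⟩ := (hA.isLeadingPivot hπ ha hja).unique hπ
      (hAB ▸ hB.isLeadingPivot hπ hb hjb) (hA.degR_head_lt ha hja) (hB.degR_head_lt hb hjb)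
    have htail : rowSpan R A = rowSpan R (Matrix.of (Matrix.vecCons a A)) ⊓
        LinearMap.ker (LinearMap.proj j) := hA.rowSpan_tail hπ ha hja
    obtain rfl : A = B := ih hA.tail hB.tail (by rw [htail, hB.rowSpan_tail hπ hb hjb, hAB])
    have hab : a - b ∈ rowSpan R A := by
      rw [htail]
      refine Submodule.mem_inf.mpr
        ⟨sub_mem (row_mem_rowSpan _ 0) (hAB ▸ row_mem_rowSpan _ 0), ?_⟩
      rw [LinearMap.mem_ker, LinearMap.proj_apply, Pi.sub_apply, hA.head_eq_pow ha hja,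
        hB.head_eq_pow hb hjb, hdeg, sub_self]
    rw [hA.eq_of_sub_mem_rowSpan hπ hV hB hab]

end RowCanonicalForm

theorem rcf_rowSpan_bijOn_general {R : Type*} [CommRing R] [Fintype R] [IsLocalRing R]
    (s : ℕ) (π : R)
    (hmax : IsLocalRing.maximalIdeal R = Ideal.span {π})
    (hnil : π ^ s = 0) (hnil' : π ^ (s - 1) ≠ 0)
    (V : Set R) (hV : IsCompleteResidues π V)
    (n : ℕ) (μ κ : Fin s → ℕ)
    (hκn : ∀ i, κ i ≤ n) :
    Set.BijOn (fun A : Matrix (Fin n) (Fin (shapeLast μ)) R => rowSpan R A)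
      {A | IsRCF π s V A ∧ (∀ i, A i ∈ shapeModule R π μ) ∧
        HasShape R π κ ↥(rowSpan R A)}
      {M : Submodule R (Fin (shapeLast μ) → R) | M ≤ shapeModule R π μ ∧
        HasShape R π κ ↥M} ∧
    Nat.card {A : Matrix (Fin n) (Fin (shapeLast μ)) R | IsRCF π s V A ∧
        (∀ i, A i ∈ shapeModule R π μ) ∧ HasShape R π κ ↥(rowSpan R A)} =
      Nat.card {M : Submodule R (Fin (shapeLast μ) → R) | M ≤ shapeModule R π μ ∧
        HasShape R π κ ↥M} := by
  have hπ : IsUniformizer π s := ⟨hmax, hnil, hnil'⟩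
  refine (fun hbij : Set.BijOn _ _ _ => ⟨hbij, Nat.card_congr (hbij.equiv _)⟩) ⟨?_, ?_, ?_⟩
  · rintro A ⟨-, hrows, hshape⟩
    exact ⟨Submodule.span_le.mpr (Set.range_subset_iff.mpr hrows), hshape⟩
  · rintro A ⟨hA, -, -⟩ B ⟨hB, -, -⟩ hAB
    exact hπ.eq_of_isRCF_of_rowSpan_eq hV hA hB hAB
  · rintro M ⟨hle, hshape⟩
    obtain ⟨A, hA, rfl⟩ := hπ.exists_isRCF_rowSpan_eq hV (hπ.card_le_of_hasShape hκn hshape)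
    exact ⟨A, ⟨hA, fun i => hle (row_mem_rowSpan A i), hshape⟩, rfl⟩

/-- The map sending a matrix to its row span is a bijection between row canonical
forms in `T_κ(R^(n×μ))` and submodules of `R^μ` of shape `κ`; in particular the two
sets have the same cardinality. -/
theorem rcf_rowSpan_bijOn {R : Type*} [CommRing R] [Fintype R] [IsLocalRing R] [IsPrincipalIdealRing R]
    (q s : ℕ) (hs : 0 < s) (π : R)
    (hmax : IsLocalRing.maximalIdeal R = Ideal.span {π})
    (hnil : π ^ s = 0) (hnil' : π ^ (s - 1) ≠ 0)
    (hq : Nat.card (IsLocalRing.ResidueField R) = q)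
    (V : Set R) (hV : IsCompleteResidues π V)
    (n : ℕ) (μ κ : Fin s → ℕ) (hμ : Monotone μ) (hκ : Monotone κ)
    (hκn : ∀ i, κ i ≤ n) (hκμ : ∀ i, κ i ≤ μ i) :
    Set.BijOn (fun A : Matrix (Fin n) (Fin (shapeLast μ)) R => rowSpan R A)
      {A | IsRCF π s V A ∧ (∀ i, A i ∈ shapeModule R π μ) ∧
        HasShape R π κ ↥(rowSpan R A)}
      {M : Submodule R (Fin (shapeLast μ) → R) | M ≤ shapeModule R π μ ∧
        HasShape R π κ ↥M} ∧
    Nat.card {A : Matrix (Fin n) (Fin (shapeLast μ)) R | IsRCF π s V A ∧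
        (∀ i, A i ∈ shapeModule R π μ) ∧ HasShape R π κ ↥(rowSpan R A)} =
      Nat.card {M : Submodule R (Fin (shapeLast μ) → R) | M ≤ shapeModule R π μ ∧
        HasShape R π κ ↥M} :=
  rcf_rowSpan_bijOn_general s π hmax hnil hnil' V hV n μ κ hκn
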